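/- If x_0(j,k) = x_1(j,k) = 1 for some pair (j,k), then the 6-vertex set {a_{1,j}, b_{1,j}, b_{2,k}, p_1, p_2, a_{2,k}} forms an induced 6-cycle in the lower bound graph G(x_0,x_1) of the induced even cycle construction, where p_1, p_2 are the internal vertices of the length-3 path between a_{2,k} and b_{2,k}. -/

import Mathlib

/-- Vertices: `inl (s, i)` is the `i`-th vertex of `A₁, A₂, B₁, B₂`
(for `s = 0, 1, 2, 3`), and `inr (i, t)` for `t = 0, 1` are the internal vertices
`p₁, p₂` of the length-3 path joining `a_{2,i}` to `b_{2,i}`. -/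
abbrev LBVertex (N : ℕ) := (Fin 4 × Fin N) ⊕ (Fin N × Fin 2)

/-- Base relation for the variant lower bound graph: each of `A₁, A₂, B₁, B₂` is a
clique; there is an edge `{a_{1,i}, b_{1,i}}` for each `i`; a path of length 3
`a_{2,i} - p_{i,0} - p_{i,1} - b_{2,i}` for each `i`; and encoding edges
`{a_{1,j}, a_{2,k}}` iff `x₀ j k` and `{b_{1,j}, b_{2,k}}` iff `x₁ j k`. -/
def lbRel {N : ℕ} (x0 x1 : Fin N → Fin N → Prop) :
    LBVertex N → LBVertex N → Prop := fun a b =>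
  match a, b with
  | .inl (s, i), .inl (t, j) =>
      (s = t) ∨ (s = 0 ∧ t = 2 ∧ i = j) ∨ (s = 0 ∧ t = 1 ∧ x0 i j) ∨
        (s = 2 ∧ t = 3 ∧ x1 i j)
  | .inl (s, i), .inr (j, t) => i = j ∧ ((s = 1 ∧ t = 0) ∨ (s = 3 ∧ t = 1))
  | .inr (i, t), .inr (j, u) => i = j ∧ t = 0 ∧ u = 1
  | .inr _, .inl _ => False

/-! The edges `a_{1,j} a_{2,k}` (from `x₀ j k`) and `b_{2,k} b_{1,j}` (from `x₁ j k`), the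
path `a_{2,k} p₁ p₂ b_{2,k}` and the matching edge `b_{1,j} a_{1,j}` close a 6-cycle. It has
no chord: its six vertices meet each clique `A₁, A₂, B₁, B₂` once, the path vertices are
adjacent only to their neighbours on the path, and the remaining cross edges between the
cliques are a matching edge or encoding edges with a different index. -/

namespace LBVertex

variable {N : ℕ}

/-- `a_{1,j}, a_{2,k}, p₁, p₂, b_{2,k}, b_{1,j}` in cyclic order. -/
def sixCycle (j k : Fin N) : Fin 6 → LBVertex N :=
  ![.inl (0, j), .inl (1, k), .inr (k, 0), .inr (k, 1), .inl (3, k), .inl (2, j)]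

theorem sixCycle_injective (j k : Fin N) : Function.Injective (sixCycle j k) := by
  intro a b hab
  fin_cases a <;> fin_cases b <;> simp_all [sixCycle]

theorem range_sixCycle (j k : Fin N) :
    Set.range (sixCycle j k) = {.inl (0, j), .inl (2, j), .inl (3, k), .inr (k, 1),
      .inr (k, 0), .inl (1, k)} := by
  simp only [sixCycle, Matrix.range_cons, Matrix.range_empty, Set.union_empty,
    Set.singleton_union]
  ext v
  simp only [Set.mem_insert_iff, Set.mem_singleton_iff]
  tauto

theorem fromRel_lbRel_adj_sixCycle_iff {x0 x1 : Fin N → Fin N → Prop} {j k : Fin N}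
    (h0 : x0 j k) (h1 : x1 j k) (a b : Fin 6) :
    (SimpleGraph.fromRel (lbRel x0 x1)).Adj (sixCycle j k a) (sixCycle j k b) ↔
      (SimpleGraph.cycleGraph 6).Adj a b := by
  fin_cases a <;> fin_cases b <;>
    simp [sixCycle, lbRel, h0, h1, SimpleGraph.cycleGraph_adj'] <;> decide

end LBVertex

/-- If `x₀ j k = x₁ j k = 1`, then the six vertices
`a_{1,j}, b_{1,j}, b_{2,k}, p₁, p₂, a_{2,k}` (where `p₁, p₂` are the internal vertices
of the length-3 path between `a_{2,k}` and `b_{2,k}`) form an induced 6-cycle in the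
lower bound graph `G(x₀, x₁)`. -/
theorem explicit_induced_sixCycle (N : ℕ) (x0 x1 : Fin N → Fin N → Prop)
    (j k : Fin N) (h0 : x0 j k) (h1 : x1 j k) :
    ∃ f : SimpleGraph.cycleGraph 6 ↪g SimpleGraph.fromRel (lbRel x0 x1),
      Set.range f = {Sum.inl (0, j), Sum.inl (2, j), Sum.inl (3, k),
        Sum.inr (k, 1), Sum.inr (k, 0), Sum.inl (1, k)} :=
  ⟨⟨⟨LBVertex.sixCycle j k, LBVertex.sixCycle_injective j k⟩,
      LBVertex.fromRel_lbRel_adj_sixCycle_iff h0 h1 _ _⟩,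
    LBVertex.range_sixCycle j k⟩
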